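/- In the uniform recursive tree U_g with branching parameter f ≥ 1, the resistance distance of the central node (the sum of resistance distances from the central node to all nodes) equals r_{{0}}(g) = g·f·(f+1)^{g−1}. -/

import Mathlib

open Matrix BigOperators

/-- The vertices of the uniform recursive tree `U_g` with branching parameter `f`:
`U_0` is a single node (the central node), and at each iteration every existing
node receives `f` new leaf children. -/
def URTV (f : ℕ) : ℕ → Type
  | 0 => Unit
  | g + 1 => URTV f g ⊕ (URTV f g × Fin f)

instance urtFintype (f : ℕ) : ∀ g, Fintype (URTV f g)
  | 0 => inferInstanceAs (Fintype Unit)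
  | g + 1 =>
    letI := urtFintype f g
    inferInstanceAs (Fintype (URTV f g ⊕ (URTV f g × Fin f)))

instance urtDecEq (f : ℕ) : ∀ g, DecidableEq (URTV f g)
  | 0 => inferInstanceAs (DecidableEq Unit)
  | g + 1 =>
    letI := urtDecEq f g
    inferInstanceAs (DecidableEq (URTV f g ⊕ (URTV f g × Fin f)))

/-- The adjacency relation of `U_g`: each new leaf is joined to the node it was
attached to. -/
def urtRel (f : ℕ) : ∀ g, URTV f g → URTV f g → Prop
  | 0, _, _ => False
  | g + 1, Sum.inl x, Sum.inl y => urtRel f g x y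
  | _ + 1, Sum.inl x, Sum.inr (y, _) => x = y
  | _ + 1, Sum.inr (x, _), Sum.inl y => x = y
  | _ + 1, Sum.inr _, Sum.inr _ => False

/-- The uniform recursive tree `U_g` as a simple graph. -/
def urtGraph (f g : ℕ) : SimpleGraph (URTV f g) :=
  SimpleGraph.fromRel (urtRel f g)

/-- The central node of `U_g`. -/
def urtCenter (f : ℕ) : ∀ g, URTV f g
  | 0 => ()
  | g + 1 => Sum.inl (urtCenter f g)

/-- The label `{0, i_1, …, i_n}` of a node of `U_g`: the increasing list of levels
(creation iterations) of the nodes on the unique path from the central node to the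
node.  The central node has label `[0]`; a node created at iteration `g+1` appends
`g+1` to the label of the node it was attached to. -/
def urtLabel (f : ℕ) : ∀ g, URTV f g → List ℕ
  | 0, _ => [0]
  | g + 1, Sum.inl x => urtLabel f g x
  | g + 1, Sum.inr (x, _) => urtLabel f g x ++ [g + 1]

/-- The all-ones matrix `J`. -/
def JMat (V : Type*) : Matrix V V ℝ := Matrix.of fun _ _ => (1 : ℝ)

/-- The Laplacian matrix (over `ℝ`) of a simple graph (all edge weights `1`). -/
noncomputable def glap {V : Type*} [Fintype V] (G : SimpleGraph V) : Matrix V V ℝ := by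
  classical exact SimpleGraph.lapMatrix ℝ G

/-- The pseudoinverse `L† = (L + (1/N)·J)⁻¹ - (1/N)·J` of the graph Laplacian. -/
noncomputable def gdag {V : Type*} [Fintype V] [DecidableEq V] (G : SimpleGraph V) :
    Matrix V V ℝ :=
  (glap G + ((Fintype.card V : ℝ))⁻¹ • JMat V)⁻¹ - ((Fintype.card V : ℝ))⁻¹ • JMat V

/-!
The distance from the central node to a node is its depth: every edge joins a node to one of
its children, so it changes the depth by exactly one, and the chain of parents is a walk of that
length. Each of the `(f + 1)^g` nodes of `U_g` receives `f` children one level deeper, so the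
depth sums satisfy `S_{g+1} = (f + 1) S_g + f (f + 1)^g`, which `g f (f + 1)^{g-1}` solves.
-/

def urtDepth (f : ℕ) : ∀ g, URTV f g → ℕ
  | 0, _ => 0
  | g + 1, Sum.inl x => urtDepth f g x
  | g + 1, Sum.inr (x, _) => urtDepth f g x + 1

section

variable {f : ℕ}

theorem sum_URTV_succ {M : Type*} [AddCommMonoid M] {g : ℕ} (h : URTV f (g + 1) → M) :
    ∑ y, h y = ∑ x, h (Sum.inl x) + ∑ x, ∑ i, h (Sum.inr (x, i)) :=
  (Fintype.sum_sum_type h).trans (by rw [Fintype.sum_prod_type])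

theorem card_URTV (g : ℕ) : Fintype.card (URTV f g) = (f + 1) ^ g := by
  induction g with
  | zero => rfl
  | succ g ih =>
    rw [Fintype.card_eq_sum_ones, sum_URTV_succ]
    simp only [Finset.sum_const, Finset.card_univ, Fintype.card_fin, smul_eq_mul, mul_one, ih]
    ring

theorem urtDepth_urtCenter (g : ℕ) : urtDepth f g (urtCenter f g) = 0 := by
  induction g with
  | zero => rfl
  | succ g ih => exact ih

theorem urtDepth_le_of_adj {g : ℕ} {u v : URTV f g} (h : (urtGraph f g).Adj u v) :
    urtDepth f g v ≤ urtDepth f g u + 1 := by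
  induction g with
  | zero => exact absurd h.2 (by simp [urtRel])
  | succ g ih =>
    rcases u with x | ⟨x, i⟩ <;> rcases v with y | ⟨y, j⟩ <;>
      obtain ⟨hne, h | h⟩ := h <;> simp only [urtRel] at h
    all_goals first
      | (subst h; simp only [urtDepth]; omega)
      | exact ih ⟨fun hxy => hne (congrArg Sum.inl hxy), Or.inl h⟩
      | exact ih ⟨fun hxy => hne (congrArg Sum.inl hxy), Or.inr h⟩

def urtGraphInl (f g : ℕ) : urtGraph f g →g urtGraph f (g + 1) where
  toFun := Sum.inl
  map_rel' h := ⟨fun he => h.1 (Sum.inl_injective he), h.2⟩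

theorem urtGraph_adj_inl_inr (g : ℕ) (x : URTV f g) (i : Fin f) :
    (urtGraph f (g + 1)).Adj (Sum.inl x) (Sum.inr (x, i)) :=
  ⟨Sum.inl_ne_inr, Or.inl rfl⟩

theorem exists_walk_urtCenter_length_eq_urtDepth (g : ℕ) (v : URTV f g) :
    ∃ p : (urtGraph f g).Walk (urtCenter f g) v, p.length = urtDepth f g v := by
  induction g with
  | zero => exact ⟨.nil, rfl⟩
  | succ g ih =>
    rcases v with x | ⟨x, i⟩ <;> obtain ⟨p, hp⟩ := ih x
    · exact ⟨p.map (urtGraphInl f g), (p.length_map _).trans hp⟩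
    · exact ⟨(p.map (urtGraphInl f g)).concat (urtGraph_adj_inl_inr g x i),
        ((p.map _).length_concat _).trans (congrArg (· + 1) ((p.length_map _).trans hp))⟩

theorem urtDepth_le_add_length {g : ℕ} {u v : URTV f g} (p : (urtGraph f g).Walk u v) :
    urtDepth f g v ≤ urtDepth f g u + p.length := by
  induction p with
  | nil => simp
  | cons h _ ih =>
    rw [SimpleGraph.Walk.length_cons]
    have := urtDepth_le_of_adj h
    omega

theorem dist_urtCenter (g : ℕ) (v : URTV f g) :
    (urtGraph f g).dist (urtCenter f g) v = urtDepth f g v := by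
  obtain ⟨p, hp⟩ := exists_walk_urtCenter_length_eq_urtDepth g v
  obtain ⟨q, hq⟩ := p.reachable.exists_walk_length_eq_dist
  have := urtDepth_le_add_length q
  rw [urtDepth_urtCenter] at this
  exact le_antisymm (hp ▸ SimpleGraph.dist_le p) (by omega)

theorem sum_urtDepth_succ (g : ℕ) :
    ∑ y, urtDepth f (g + 1) y = (f + 1) * ∑ x, urtDepth f g x + f * (f + 1) ^ g := by
  rw [sum_URTV_succ, ← card_URTV g, Fintype.card_eq_sum_ones, Finset.mul_sum, Finset.mul_sum,
    ← Finset.sum_add_distrib, ← Finset.sum_add_distrib]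
  refine Finset.sum_congr rfl fun x _ => ?_
  simp only [urtDepth, Finset.sum_const, Finset.card_univ, Fintype.card_fin, smul_eq_mul]
  ring

theorem sum_urtDepth (g : ℕ) : ∑ y, urtDepth f g y = g * f * (f + 1) ^ (g - 1) := by
  induction g with
  | zero => simp [urtDepth]
  | succ g ih =>
    rw [sum_urtDepth_succ, ih]
    cases g with
    | zero => simp
    | succ k => simp only [Nat.add_sub_cancel, pow_succ]; ring

end

theorem stmt_16_general (f : ℕ) (g : ℕ) :
    ∑ y : URTV f g, (urtGraph f g).dist (urtCenter f g) y =
      g * f * (f + 1) ^ (g - 1) := by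
  simp only [dist_urtCenter]
  exact sum_urtDepth g

/-- In the uniform recursive tree `U_g` with branching parameter `f ≥ 1`, the
resistance distance of the central node (the sum of resistance distances from the
central node to all nodes; since `U_g` is a tree, resistance distance coincides
with shortest-path distance) equals `g·f·(f+1)^{g-1}`. -/
theorem stmt_16 (f : ℕ) (hf : 1 ≤ f) (g : ℕ) :
    ∑ y : URTV f g, (urtGraph f g).dist (urtCenter f g) y =
      g * f * (f + 1) ^ (g - 1) :=
  stmt_16_general f g
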